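/- arXiv:1806.06543 — 3 statements merged into one kernel-verified Lean document; each statement's English description precedes it below -/
import Mathlib

section
/- Let k be a perfect field of characteristic p > 0, let N be a nonnegative integer with base-p expansion N = (N_{ℓ-1} … N_1 N_0)_p, and let f = ∑ f_n t^n ∈ k[[t]]. Then f_N = [(Λ_{N_{ℓ-1}} ∘ ⋯ ∘ Λ_{N_1} ∘ Λ_{N_0} f)(0)]^{p^ℓ}, where g(0) denotes the constant coefficient of g. -/
/-- The section operator `Λ_r` on `k⟦t⟧`. -/
noncomputable def sectionOp (k : Type*) [Field k] (p : ℕ) [Fact p.Prime]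
    [CharP k p] [PerfectRing k p] (r : ℕ) (g : PowerSeries k) : PowerSeries k :=
  PowerSeries.mk fun n => (frobeniusEquiv k p).symm (PowerSeries.coeff (p * n + r) g)

/-!
Writing `N = p * M + N₀`, the coefficient `f_N` is the `p`-th power of the `M`-th coefficient
of `Λ_{N₀} f`; iterating along the digits peels them off one at a time, from the lowest.
-/

theorem coeff_mul_add_eq_coeff_sectionOp_pow {k : Type*} [Field k] {p : ℕ} [Fact p.Prime]
    [CharP k p] [PerfectRing k p] (r n : ℕ) (g : PowerSeries k) :
    PowerSeries.coeff (p * n + r) g = PowerSeries.coeff n (sectionOp k p r g) ^ p := by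
  rw [sectionOp, PowerSeries.coeff_mk, ← frobenius_def, ← frobeniusEquiv_apply,
    RingEquiv.apply_symm_apply]

theorem sum_range_succ_digits_mul_pow (p ℓ : ℕ) (Nd : ℕ → ℕ) :
    ∑ i ∈ Finset.range (ℓ + 1), Nd i * p ^ i
      = p * ∑ i ∈ Finset.range ℓ, Nd (i + 1) * p ^ i + Nd 0 := by
  rw [Finset.sum_range_succ', Finset.mul_sum]
  simp only [pow_succ, pow_zero, mul_one]
  congr 1
  exact Finset.sum_congr rfl fun i _ => by ring

theorem coeff_eq_sections_general (k : Type*) [Field k] (p : ℕ) [Fact p.Prime]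
    [CharP k p] [PerfectRing k p] (ℓ : ℕ) (Nd : ℕ → ℕ)
    (f : PowerSeries k) :
    PowerSeries.coeff (∑ i ∈ Finset.range ℓ, Nd i * p ^ i) f
      = (PowerSeries.constantCoeff
          ((List.range ℓ).foldl (fun g i => sectionOp k p (Nd i) g) f)) ^ p ^ ℓ := by
  induction ℓ generalizing Nd f with
  | zero => simp
  | succ ℓ ih =>
    rw [List.range_succ_eq_map, List.foldl_cons, List.foldl_map,
      sum_range_succ_digits_mul_pow, coeff_mul_add_eq_coeff_sectionOp_pow,
      ih (fun i => Nd (i + 1)), ← pow_mul, ← pow_succ]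

/-- If `N = ∑_{i<ℓ} N_i p^i` with digits `N_i < p`, then for any
`f ∈ k⟦t⟧` the `N`-th coefficient of `f` equals
`[(Λ_{N_{ℓ-1}} ∘ ⋯ ∘ Λ_{N_0} f)(0)]^{p^ℓ}`, where `(0)` denotes the constant
coefficient. -/
theorem coeff_eq_sections (k : Type*) [Field k] (p : ℕ) [Fact p.Prime]
    [CharP k p] [PerfectRing k p] (ℓ : ℕ) (Nd : ℕ → ℕ) (hNd : ∀ i < ℓ, Nd i < p)
    (f : PowerSeries k) :
    PowerSeries.coeff (∑ i ∈ Finset.range ℓ, Nd i * p ^ i) f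
      = (PowerSeries.constantCoeff
          ((List.range ℓ).foldl (fun g i => sectionOp k p (Nd i) g) f)) ^ p ^ ℓ :=
  coeff_eq_sections_general k p ℓ Nd f
end

section
/- With notation as above (k perfect of characteristic p, K = k((t))((T)), f ∈ k[[t]], section operators Λ_{r,s} on K and Λ_r on k((t))), the commutation relation Λ_r ∘ res = res ∘ Λ_{r,p-1} holds on K, where res : K → k((t)) is the residue map in T. -/
noncomputable section

set_option maxHeartbeats 1000000

/-- `K = k((t))((T))`. -/
abbrev KK (k : Type*) [Field k] := LaurentSeries (LaurentSeries k)

/-- `t` viewed inside `K = k((t))((T))`. -/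
def tKK (k : Type*) [Field k] : KK k := HahnSeries.C (HahnSeries.single (1 : ℤ) (1 : k))

/-- `t` inside `k((t))`. -/
def tL (k : Type*) [Field k] : LaurentSeries k := HahnSeries.single (1 : ℤ) (1 : k)

/-- `f + T` inside `K = k((t))((T))`, for `f ∈ k⟦t⟧`. -/
def fT (k : Type*) [Field k] (f : PowerSeries k) : KK k :=
  HahnSeries.C (HahnSeries.ofPowerSeries ℤ k f)
    + HahnSeries.single (1 : ℤ) (1 : LaurentSeries k)

/-- The index `p - 1` as an element of `Fin p`. -/
def lastDigit (p : ℕ) [Fact p.Prime] : Fin p :=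
  ⟨p - 1, Nat.sub_lt (Fact.out (p := p.Prime)).pos Nat.one_pos⟩

/-!
In characteristic `p` the coefficients of `h ^ p` are `h_n ^ p` at `p * n` and vanish off `pℤ`.
Expanding `(f + T) ^ s` binomially, the `T⁻¹`-coefficient of `(f + T) ^ s * h ^ p` therefore only
sees the monomial `T ^ (p - 1)`, which occurs only for `s = p - 1`, with coefficient `1`. Taking
residues in `g = ∑ t ^ r (f + T) ^ s (Λ_{r,s} g) ^ p` gives `res g = ∑ t ^ r (res Λ_{r,p-1} g) ^ p`,
and the digits of such a decomposition are unique: the coefficient at `p * n + r` of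
`∑ t ^ r a_r ^ p` is `(a_r)_n ^ p`, and Frobenius is injective.
-/

open HahnSeries
open scoped LaurentSeries PowerSeries

instance HahnSeries.instCharP {Γ R : Type*} [AddCommMonoid Γ] [PartialOrder Γ]
    [IsOrderedCancelAddMonoid Γ] [NonAssocSemiring R] (p : ℕ) [CharP R p] : CharP R⟦Γ⟧ p :=
  charP_of_injective_ringHom C_injective p

namespace PowerSeries

theorem map_frobenius_expand {R : Type*} [CommRing R] {p : ℕ} [ExpChar R p] (φ : R⟦X⟧) :
    map (frobenius R p) (expand p (expChar_ne_zero R p) φ) = φ ^ p :=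
  MvPowerSeries.map_frobenius_expand p (expChar_ne_zero R p)

theorem coeff_pow_expChar {R : Type*} [CommRing R] {p : ℕ} [ExpChar R p] (φ : R⟦X⟧) (n : ℕ) :
    coeff n (φ ^ p) = if p ∣ n then coeff (n / p) φ ^ p else 0 := by
  rw [← map_frobenius_expand, coeff_map, coeff_expand]
  split_ifs
  · rfl
  · simp

end PowerSeries

namespace LaurentSeries

variable {R : Type*} [CommRing R] {p : ℕ} [ExpChar R p]

theorem coeff_coe_pow_expChar (φ : R⟦X⟧) (m : ℤ) :
    ((φ : R⸨X⸩) ^ p).coeff m = if (p : ℤ) ∣ m then (φ : R⸨X⸩).coeff (m / p) ^ p else 0 := by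
  have hp : p ≠ 0 := expChar_ne_zero R p
  rw [← PowerSeries.coe_pow]
  by_cases hm : m < 0
  · have hdiv : m / p < 0 := Int.ediv_neg_of_neg_of_pos hm (by omega)
    simp only [PowerSeries.coeff_coe, if_pos hm, if_pos hdiv, zero_pow hp, ite_self]
  lift m to ℕ using not_lt.mp hm
  rw [coeff_coe_powerSeries, PowerSeries.coeff_pow_expChar]
  by_cases h : p ∣ m
  · rw [if_pos h, if_pos (Int.natCast_dvd_natCast.mpr h), ← Int.natCast_div, coeff_coe_powerSeries]
  · rw [if_neg h, if_neg (mt Int.natCast_dvd_natCast.mp h)]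

theorem coeff_pow_expChar (x : R⸨X⸩) (m : ℤ) :
    (x ^ p).coeff m = if (p : ℤ) ∣ m then x.coeff (m / p) ^ p else 0 := by
  have hp : (p : ℤ) ≠ 0 := by exact_mod_cast expChar_ne_zero R p
  rw [← single_order_mul_powerSeriesPart x, mul_pow, single_pow, one_pow, coeff_single_mul,
    one_mul, coeff_coe_pow_expChar, coeff_single_mul, one_mul, nsmul_eq_mul]
  by_cases h : (p : ℤ) ∣ m
  · rw [if_pos ((dvd_sub_left (dvd_mul_right _ _)).mpr h), if_pos h, Int.sub_mul_ediv_left _ _ hp]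
  · rw [if_neg (mt (dvd_sub_left (dvd_mul_right _ _)).mp h), if_neg h]

theorem coeff_single_mul_pow_neg_one {m : ℕ} (hm : m < p) (a : R) (h : R⸨X⸩) :
    (single (m : ℤ) a * h ^ p).coeff (-1) = if m = p - 1 then a * h.coeff (-1) ^ p else 0 := by
  have hp : (p : ℤ) ≠ 0 := by exact_mod_cast expChar_ne_zero R p
  rw [coeff_single_mul, coeff_pow_expChar]
  by_cases hlast : m = p - 1
  · have hneg : -1 - (m : ℤ) = p * (-1) := by omega
    rw [if_pos hlast, hneg, if_pos (dvd_mul_right _ _), Int.mul_ediv_cancel_left _ hp]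
  · rw [if_neg hlast, if_neg, mul_zero]
    intro hdvd
    have := Int.eq_zero_of_abs_lt_dvd hdvd (by rw [abs_lt]; omega)
    omega

theorem coeff_single_one_add_C_pow_mul_pow_neg_one {s : ℕ} (hs : s < p) (c : R) (h : R⸨X⸩) :
    ((single 1 1 + C c) ^ s * h ^ p).coeff (-1) = if s = p - 1 then h.coeff (-1) ^ p else 0 := by
  have hterm : ∀ j ∈ Finset.range (s + 1), (single 1 1 ^ j * C c ^ (s - j) * (s.choose j : R⸨X⸩)
      * h ^ p).coeff (-1) = if j = p - 1 then c ^ (s - j) * s.choose j * h.coeff (-1) ^ p else 0 := by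
    intro j hj
    have hjp : j < p := by rw [Finset.mem_range] at hj; omega
    rw [← coeff_single_mul_pow_neg_one hjp]
    congr 2
    rw [single_pow, one_pow, nsmul_eq_mul, mul_one, ← map_pow, ← map_natCast (C : R →+* R⸨X⸩),
      mul_assoc, ← map_mul, C_apply, single_mul_single, add_zero, one_mul]
  rw [add_pow, Finset.sum_mul, coeff_sum, Finset.sum_congr rfl hterm, Finset.sum_ite_eq']
  by_cases hlast : s = p - 1
  · rw [if_pos (by simp; omega), if_pos hlast, ← hlast]
    simp
  · rw [if_neg (by simp; omega), if_neg hlast]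

theorem coeff_sum_single_one_pow_mul_pow (d : Fin p → R⸨X⸩) (n : ℤ) (r₀ : Fin p) :
    (∑ r : Fin p, single 1 1 ^ (r : ℕ) * d r ^ p).coeff (p * n + r₀) = (d r₀).coeff n ^ p := by
  have hp : (p : ℤ) ≠ 0 := by exact_mod_cast expChar_ne_zero R p
  rw [coeff_sum, Finset.sum_eq_single r₀]
  · rw [single_pow, one_pow, coeff_single_mul, one_mul, nsmul_eq_mul, mul_one, add_sub_cancel_right,
      coeff_pow_expChar, if_pos (dvd_mul_right _ _), Int.mul_ediv_cancel_left _ hp]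
  · intro r _ hr
    rw [single_pow, one_pow, coeff_single_mul, one_mul, nsmul_eq_mul, mul_one, coeff_pow_expChar,
      if_neg]
    intro hdvd
    rw [add_sub_assoc, dvd_add_right (dvd_mul_right _ _)] at hdvd
    have := Int.eq_zero_of_abs_lt_dvd hdvd (by rw [abs_lt]; omega)
    exact hr (Fin.ext (by omega))
  · simp

theorem eq_of_sum_single_one_pow_mul_pow_eq [IsReduced R] {a b : Fin p → R⸨X⸩}
    (h : ∑ r : Fin p, single 1 1 ^ (r : ℕ) * a r ^ p = ∑ r : Fin p, single 1 1 ^ (r : ℕ) * b r ^ p) :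
    a = b := by
  funext r
  ext n
  apply frobenius_inj R p
  simpa only [frobenius_def, coeff_sum_single_one_pow_mul_pow] using congrArg (coeff · (p * n + r)) h

end LaurentSeries

theorem coeff_tKK_pow_mul_fT_pow_mul_pow_neg_one {k : Type*} [Field k] {p : ℕ} [Fact p.Prime]
    [CharP k p] (f : PowerSeries k) (h : KK k) (r s : Fin p) :
    ((tKK k) ^ (r : ℕ) * (fT k f) ^ (s : ℕ) * h ^ p).coeff (-1) =
      if s = lastDigit p then tL k ^ (r : ℕ) * h.coeff (-1) ^ p else 0 := by
  have hsplit : (tKK k) ^ (r : ℕ) * (fT k f) ^ (s : ℕ) * h ^ p = C (tL k ^ (r : ℕ)) *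
      ((single 1 1 + C (f : LaurentSeries k)) ^ (s : ℕ) * h ^ p) := by
    rw [tKK, fT, add_comm, map_pow, tL, mul_assoc]
  rw [hsplit, C_mul_eq_smul, coeff_smul, smul_eq_mul,
    LaurentSeries.coeff_single_one_add_C_pow_mul_pow_neg_one s.isLt, mul_ite, mul_zero]
  exact if_congr (Fin.ext_iff (b := lastDigit p)).symm rfl rfl

theorem section_residue_commute_general (k : Type*) [Field k] (p : ℕ) [Fact p.Prime] [CharP k p]
    (f : PowerSeries k)
    (Λ : Fin p → Fin p → KK k → KK k)
    (hΛ : ∀ g : KK k, g = ∑ r : Fin p, ∑ s : Fin p,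
      (tKK k) ^ (r : ℕ) * (fT k f) ^ (s : ℕ) * (Λ r s g) ^ p)
    (lam : Fin p → LaurentSeries k → LaurentSeries k)
    (hlam : ∀ g : LaurentSeries k, g = ∑ r : Fin p, (tL k) ^ (r : ℕ) * (lam r g) ^ p)
    (r : Fin p) (g : KK k) :
    lam r (g.coeff (-1 : ℤ)) = (Λ r (lastDigit p) g).coeff (-1 : ℤ) := by
  have hres : g.coeff (-1) = ∑ i : Fin p, tL k ^ (i : ℕ) * (Λ i (lastDigit p) g).coeff (-1) ^ p := by
    conv_lhs => rw [hΛ g]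
    simp only [coeff_sum, coeff_tKK_pow_mul_fT_pow_mul_pow_neg_one, Finset.sum_ite_eq',
      Finset.mem_univ, if_true]
  exact congrFun (LaurentSeries.eq_of_sum_single_one_pow_mul_pow_eq ((hlam _).symm.trans hres)) r

/-- Let `k` be perfect of characteristic `p`, `K = k((t))((T))`,
`f ∈ k⟦t⟧`.  Let `Λ_{r,s}` be the two-variable section operators on `K`
(characterized by `g = ∑_{r,s} t^r (f+T)^s (Λ_{r,s} g)^p`) and `Λ_r` the section
operators on `k((t))` (characterized by `g = ∑_r t^r (Λ_r g)^p`).  Then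
`Λ_r ∘ res = res ∘ Λ_{r,p-1}` on `K`, where `res` takes the coefficient of
`T^{-1}`. -/
theorem section_residue_commute (k : Type*) [Field k] (p : ℕ) [Fact p.Prime] [CharP k p]
    [PerfectRing k p] (f : PowerSeries k)
    (Λ : Fin p → Fin p → KK k → KK k)
    (hΛ : ∀ g : KK k, g = ∑ r : Fin p, ∑ s : Fin p,
      (tKK k) ^ (r : ℕ) * (fT k f) ^ (s : ℕ) * (Λ r s g) ^ p)
    (lam : Fin p → LaurentSeries k → LaurentSeries k)
    (hlam : ∀ g : LaurentSeries k, g = ∑ r : Fin p, (tL k) ^ (r : ℕ) * (lam r g) ^ p)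
    (r : Fin p) (g : KK k) :
    lam r (g.coeff (-1 : ℤ)) = (Λ r (lastDigit p) g).coeff (-1 : ℤ) :=
  section_residue_commute_general k p f Λ hΛ lam hlam r g
end
end

section
/- (Commutation of translation with the top section) Let k be a perfect field of characteristic p, α ∈ k, E ∈ k[t,y] irreducible; let τ_α : k(t)[y]/E(t,y) → k(u)[y]/E(u+α, y) be the k-algebra isomorphism sending t ↦ u+α, y ↦ y. Then Λ_{p-1,u} ∘ τ_α = τ_α ∘ Λ_{p-1}, where Λ_{p-1} and Λ_{p-1,u} are the section operators of index p−1 on the respective fields, defined by F^{-1} = ∑_{r=0}^{p-1} t^{r/p} Λ_r and F^{-1} = ∑_{r=0}^{p-1} u^{r/p} Λ_{r,u} with F the Frobenius p-power map. -/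
/-!
Expanding `x = ∑ t^r (Λ_r x)^p` under `τ` gives `τ x = ∑ (u + γ^p)^r (τ Λ_r x)^p`. By the binomial
theorem and additivity of Frobenius this is `∑ u^s (c_s)^p` with
`c_s = ∑_r binom(r, s) γ^(r-s) τ (Λ_r x)`, the coefficients of the Taylor shift by `γ`. Uniqueness
of the expansion on `A'` identifies `Λ_{s,u} (τ x) = c_s`, and for the top index `s = p - 1` only
`r = p - 1` contributes, so `c_{p-1} = τ (Λ_{p-1} x)`.
-/

open Finset

section TaylorShift

variable {R : Type*} [CommSemiring R] {n : ℕ}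

/-- The coefficients of `∑ c_r (X + γ)^r`, a polynomial of degree `< n`. -/
def taylorShiftCoeff (γ : R) (c : Fin n → R) (s : Fin n) : R :=
  ∑ r : Fin n, ((r : ℕ).choose s : R) * γ ^ ((r : ℕ) - s) * c r

theorem add_pow_eq_sum_fin (x y : R) {r : ℕ} (hr : r < n) :
    (x + y) ^ r = ∑ s : Fin n, x ^ (s : ℕ) * y ^ (r - s) * (r.choose s : R) := by
  rw [add_pow, Fin.sum_univ_eq_sum_range (fun s => x ^ s * y ^ (r - s) * (r.choose s : R))]
  refine sum_subset (range_subset_range.2 hr) fun s _ hs => ?_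
  rw [Nat.choose_eq_zero_of_lt (by simpa using hs), Nat.cast_zero, mul_zero]

theorem sum_add_pow_mul_eq_sum_pow_mul_taylorShiftCoeff (u γ : R) (c : Fin n → R) :
    ∑ r : Fin n, (u + γ) ^ (r : ℕ) * c r = ∑ s : Fin n, u ^ (s : ℕ) * taylorShiftCoeff γ c s := by
  simp_rw [taylorShiftCoeff, mul_sum, fun r : Fin n => add_pow_eq_sum_fin u γ r.2, sum_mul]
  rw [sum_comm]
  exact sum_congr rfl fun s _ => sum_congr rfl fun r _ => by ring

theorem taylorShiftCoeff_pow_char (p : ℕ) [ExpChar R p] (γ : R) (c : Fin n → R) (s : Fin n) :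
    taylorShiftCoeff γ c s ^ p = taylorShiftCoeff (γ ^ p) (fun r => c r ^ p) s := by
  rw [taylorShiftCoeff, sum_pow_char]
  refine sum_congr rfl fun r _ => ?_
  rw [mul_pow, mul_pow, ← frobenius_def, map_natCast, ← pow_mul, ← pow_mul,
    mul_comm p]

theorem sum_add_pow_char_mul_pow_char (p : ℕ) [ExpChar R p] (u γ : R) (c : Fin n → R) :
    ∑ r : Fin n, (u + γ ^ p) ^ (r : ℕ) * c r ^ p =
      ∑ s : Fin n, u ^ (s : ℕ) * taylorShiftCoeff γ c s ^ p := by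
  simp_rw [taylorShiftCoeff_pow_char p]
  exact sum_add_pow_mul_eq_sum_pow_mul_taylorShiftCoeff u (γ ^ p) fun r => c r ^ p

theorem taylorShiftCoeff_of_val_eq_sub_one (γ : R) (c : Fin n → R) {s : Fin n}
    (hs : (s : ℕ) = n - 1) : taylorShiftCoeff γ c s = c s := by
  rw [taylorShiftCoeff, sum_eq_single s]
  · simp
  · intro r _ hrs
    rw [Nat.choose_eq_zero_of_lt (by omega), Nat.cast_zero, zero_mul, zero_mul]
  · exact fun h => absurd (mem_univ s) h

end TaylorShift

theorem translation_commutes_top_section_general (p : ℕ) [Fact p.Prime]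
    (A A' : Type*) [Field A] [Field A'] [CharP A' p]
    (τ : A ≃+* A') (t : A) (u γ : A') (hτt : τ t = u + γ ^ p)
    (Λ : Fin p → A → A)
    (hΛ : ∀ x : A, x = ∑ r : Fin p, t ^ (r : ℕ) * (Λ r x) ^ p)
    (Λu : Fin p → A' → A')
    (hΛu : ∀ x : A', x = ∑ r : Fin p, u ^ (r : ℕ) * (Λu r x) ^ p)
    (hΛuuniq : ∀ y z : Fin p → A',
      (∑ r : Fin p, u ^ (r : ℕ) * (y r) ^ p) = (∑ r : Fin p, u ^ (r : ℕ) * (z r) ^ p) → y = z)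
    (x : A) :
    Λu (lastDigit p) (τ x) = τ (Λ (lastDigit p) x) := by
  have hτx : τ x = ∑ s : Fin p, u ^ (s : ℕ) * taylorShiftCoeff γ (fun r => τ (Λ r x)) s ^ p := by
    conv_lhs => rw [hΛ x]
    simp only [map_sum, map_mul, map_pow, hτt]
    exact sum_add_pow_char_mul_pow_char p u γ _
  have hΛuτx : (fun s => Λu s (τ x)) = taylorShiftCoeff γ fun r => τ (Λ r x) :=
    hΛuuniq _ _ ((hΛu (τ x)).symm.trans hτx)
  rw [congrFun hΛuτx, taylorShiftCoeff_of_val_eq_sub_one _ _ rfl]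

/-- **commutation of translation with the top section.**
Let `A = k(t)[y]/E(t,y)` and `A' = k(u)[y]/E(u+α,y)` (abstracted here as
fields of characteristic `p`), and let `τ = τ_α : A ≃+* A'` be the `k`-algebra
isomorphism sending `t ↦ u + α` (with `α = γ^p` a `p`-th power, `k` being
perfect).  Let `Λ_r : A → A` and `Λ_{r,u} : A' → A'` be the section operators,
(uniquely) characterized by `x = ∑_{r<p} t^r (Λ_r x)^p` on `A` and
`x = ∑_{r<p} u^r (Λ_{r,u} x)^p` on `A'`.  Then
`Λ_{p-1,u} ∘ τ_α = τ_α ∘ Λ_{p-1}`. -/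
theorem translation_commutes_top_section (p : ℕ) [Fact p.Prime]
    (A A' : Type*) [Field A] [Field A'] [CharP A p] [CharP A' p]
    (τ : A ≃+* A') (t : A) (u γ : A') (hτt : τ t = u + γ ^ p)
    (Λ : Fin p → A → A)
    (hΛ : ∀ x : A, x = ∑ r : Fin p, t ^ (r : ℕ) * (Λ r x) ^ p)
    (hΛuniq : ∀ y z : Fin p → A,
      (∑ r : Fin p, t ^ (r : ℕ) * (y r) ^ p) = (∑ r : Fin p, t ^ (r : ℕ) * (z r) ^ p) → y = z)
    (Λu : Fin p → A' → A')
    (hΛu : ∀ x : A', x = ∑ r : Fin p, u ^ (r : ℕ) * (Λu r x) ^ p)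
    (hΛuuniq : ∀ y z : Fin p → A',
      (∑ r : Fin p, u ^ (r : ℕ) * (y r) ^ p) = (∑ r : Fin p, u ^ (r : ℕ) * (z r) ^ p) → y = z)
    (x : A) :
    Λu (lastDigit p) (τ x) = τ (Λ (lastDigit p) x) :=
  translation_commutes_top_section_general p A A' τ t u γ hτt Λ hΛ Λu hΛu hΛuuniq x
end
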